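/- arXiv:1012.3136 — 4 statements merged into one kernel-verified Lean document; each statement's English description precedes it below -/
import Mathlib

section
/- Let f : (0,∞) → ℝ be a strictly convex function of class C³. Then there exist a real constant α ≥ 0, an integer N ≥ 1, and a sequence (φₙ)ₙ≥₁ of bounded, nondecreasing functions of class C² on (0,∞) such that for every n ≥ 1, φₙ coincides with f' on the compact interval [1/n, n], and such that for all n ≥ N and all x, y > 0 the following inequalities hold: |φₙ(x)| ≤ 4|f'(x)| + α, |φₙ'(x)| ≤ 3 f''(x), and |φₙ(x) − φₙ(y)| ≤ 5|f'(x) − f'(y)|. -/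
open Set MeasureTheory intervalIntegral

noncomputable def auxθ (n : ℕ) (t : ℝ) : ℝ :=
  Real.smoothTransition ((t - 1/((n : ℝ)+1)) * ((n : ℝ)*((n : ℝ)+1))) *
    Real.smoothTransition ((n : ℝ) + 1 - t)

noncomputable def auxφ (f : ℝ → ℝ) (n : ℕ) (x : ℝ) : ℝ :=
  deriv f 1 + ∫ t in (1:ℝ)..x, deriv (deriv f) t * auxθ n t

lemma auxθ_nonneg (n : ℕ) (t : ℝ) : 0 ≤ auxθ n t :=
  mul_nonneg (Real.smoothTransition.nonneg _) (Real.smoothTransition.nonneg _)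

lemma auxθ_le_one (n : ℕ) (t : ℝ) : auxθ n t ≤ 1 :=
  mul_le_one₀ (Real.smoothTransition.le_one _) (Real.smoothTransition.nonneg _)
    (Real.smoothTransition.le_one _)

lemma auxθ_contDiff (n : ℕ) : ContDiff ℝ 2 (auxθ n) := by
  have h : ContDiff ℝ 2 Real.smoothTransition := by
    exact_mod_cast Real.smoothTransition.contDiff (n := (2:ℕ∞))
  exact (h.comp ((contDiff_id.sub contDiff_const).mul contDiff_const)).mul
    (h.comp (contDiff_const.sub contDiff_id))

lemma auxθ_eq_one {n : ℕ} (hn : 1 ≤ n) {t : ℝ} (ht : t ∈ Icc (1/(n:ℝ)) (n:ℝ)) :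
    auxθ n t = 1 := by
  have hn' : (1:ℝ) ≤ (n:ℝ) := by exact_mod_cast hn
  have hn0 : (0:ℝ) < (n:ℝ) := by linarith
  have h1 : (1:ℝ)/(n:ℝ) - 1/((n:ℝ)+1) = 1 / ((n:ℝ)*((n:ℝ)+1)) := by
    field_simp
    ring
  have harg1 : (1:ℝ) ≤ (t - 1/((n : ℝ)+1)) * ((n : ℝ)*((n : ℝ)+1)) := by
    have hk : (0:ℝ) < (n : ℝ)*((n : ℝ)+1) := by positivity
    have : (1:ℝ)/(n:ℝ) - 1/((n:ℝ)+1) ≤ t - 1/((n:ℝ)+1) := by linarith [ht.1]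
    calc (1:ℝ) = ((1:ℝ)/(n:ℝ) - 1/((n:ℝ)+1)) * ((n : ℝ)*((n : ℝ)+1)) := by
          rw [h1]; field_simp
      _ ≤ _ := mul_le_mul_of_nonneg_right this hk.le
  have harg2 : (1:ℝ) ≤ (n : ℝ) + 1 - t := by linarith [ht.2]
  unfold auxθ
  rw [Real.smoothTransition.one_of_one_le harg1,
    Real.smoothTransition.one_of_one_le harg2, mul_one]

lemma auxθ_eq_zero_left {n : ℕ} {t : ℝ} (ht : t ≤ 1/((n:ℝ)+1)) : auxθ n t = 0 := by
  unfold auxθ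
  rw [Real.smoothTransition.zero_of_nonpos, zero_mul]
  exact mul_nonpos_of_nonpos_of_nonneg (by linarith) (by positivity)

lemma auxθ_eq_zero_right {n : ℕ} {t : ℝ} (ht : (n:ℝ)+1 ≤ t) : auxθ n t = 0 := by
  unfold auxθ
  rw [show Real.smoothTransition ((n:ℝ)+1 - t) = 0 from
    Real.smoothTransition.zero_of_nonpos (by linarith), mul_zero]

/-- Lemma 1 of the paper: for a strictly convex `C³` function `f` on `(0,∞)`,
there is a constant `α ≥ 0`, a rank `N ≥ 1` and a sequence `(φₙ)` of bounded,
nondecreasing `C²` functions on `(0,∞)` such that `φₙ = f'` on `[1/n, n]` and,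
for `n ≥ N` and all `x, y > 0`,
`|φₙ(x)| ≤ 4|f'(x)| + α`, `|φₙ'(x)| ≤ 3 f''(x)` and
`|φₙ(x) − φₙ(y)| ≤ 5|f'(x) − f'(y)|`. -/
theorem stmt_0 (f : ℝ → ℝ)
    (hconv : StrictConvexOn ℝ (Set.Ioi (0 : ℝ)) f)
    (hC3 : ContDiffOn ℝ 3 f (Set.Ioi (0 : ℝ))) :
    ∃ α : ℝ, 0 ≤ α ∧ ∃ N : ℕ, 1 ≤ N ∧ ∃ φ : ℕ → ℝ → ℝ,
      (∀ n : ℕ, 1 ≤ n →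
        (∃ C : ℝ, ∀ x ∈ Set.Ioi (0 : ℝ), |φ n x| ≤ C) ∧
        MonotoneOn (φ n) (Set.Ioi (0 : ℝ)) ∧
        ContDiffOn ℝ 2 (φ n) (Set.Ioi (0 : ℝ)) ∧
        (∀ x ∈ Set.Icc (1 / (n : ℝ)) (n : ℝ), φ n x = deriv f x)) ∧
      (∀ n : ℕ, N ≤ n → ∀ x ∈ Set.Ioi (0 : ℝ), ∀ y ∈ Set.Ioi (0 : ℝ),
        |φ n x| ≤ 4 * |deriv f x| + α ∧
        |deriv (φ n) x| ≤ 3 * deriv (deriv f) x ∧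
        |φ n x - φ n y| ≤ 5 * |deriv f x - deriv f y|) := by
  have hopen : IsOpen (Ioi (0:ℝ)) := isOpen_Ioi
  have h1mem : (1:ℝ) ∈ Ioi (0:ℝ) := by norm_num
  have hg1C : ContDiffOn ℝ 2 (deriv f) (Ioi 0) :=
    hC3.deriv_of_isOpen hopen (by norm_num)
  have hg2C : ContDiffOn ℝ 1 (deriv (deriv f)) (Ioi 0) :=
    hg1C.deriv_of_isOpen hopen (by norm_num)
  have hg2cont : ContinuousOn (deriv (deriv f)) (Ioi 0) := hg2C.continuousOn
  have hfd : ∀ x ∈ Ioi (0:ℝ), DifferentiableAt ℝ f x := fun x hx =>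
    (hC3.differentiableOn (by norm_num)).differentiableAt (hopen.mem_nhds hx)
  have hg1d : ∀ x ∈ Ioi (0:ℝ), HasDerivAt (deriv f) (deriv (deriv f) x) x := fun x hx =>
    ((hg1C.differentiableOn (by norm_num)).differentiableAt (hopen.mem_nhds hx)).hasDerivAt
  have hmono : StrictMonoOn (deriv f) (Ioi 0) := hconv.strictMonoOn_deriv hfd
  -- second derivative is nonnegative on `(0, ∞)`
  have hg2nn : ∀ x ∈ Ioi (0:ℝ), 0 ≤ deriv (deriv f) x := by
    intro x hx
    have hx0 : (0:ℝ) < x := hx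
    have ht : Filter.Tendsto (slope (deriv f) x) (nhdsWithin x (Ioi x))
        (nhds (deriv (deriv f) x)) :=
      ((hasDerivAt_iff_tendsto_slope).1 (hg1d x hx)).mono_left
        (nhdsWithin_mono x (fun y hy => ne_of_gt hy))
    refine ge_of_tendsto ht ?_
    filter_upwards [self_mem_nhdsWithin] with y hy
    have hxy : x < y := hy
    have hy0 : y ∈ Ioi (0:ℝ) := lt_trans hx0 hxy
    have hle : deriv f x ≤ deriv f y := (hmono.monotoneOn) hx hy0 hxy.le
    rw [slope_def_field]
    have := div_nonneg (by linarith : (0:ℝ) ≤ deriv f y - deriv f x) (by linarith : (0:ℝ) ≤ y - x)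
    simpa [div_eq_iff] using this
  -- interval helpers
  have huIcc : ∀ {x y : ℝ}, x ∈ Ioi (0:ℝ) → y ∈ Ioi (0:ℝ) → uIcc x y ⊆ Ioi (0:ℝ) := by
    intro x y hx hy t ht
    exact lt_of_lt_of_le (lt_min hx hy) ht.1
  have hgcont : ∀ n : ℕ, ContinuousOn (fun t => deriv (deriv f) t * auxθ n t) (Ioi 0) :=
    fun n => hg2cont.mul ((auxθ_contDiff n).continuous.continuousOn)
  have hgint : ∀ n : ℕ, ∀ x ∈ Ioi (0:ℝ), ∀ y ∈ Ioi (0:ℝ),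
      IntervalIntegrable (fun t => deriv (deriv f) t * auxθ n t) volume x y :=
    fun n x hx y hy => ((hgcont n).mono (huIcc hx hy)).intervalIntegrable
  have hg2int : ∀ x ∈ Ioi (0:ℝ), ∀ y ∈ Ioi (0:ℝ),
      IntervalIntegrable (deriv (deriv f)) volume x y :=
    fun x hx y hy => (hg2cont.mono (huIcc hx hy)).intervalIntegrable
  have hFTC : ∀ x ∈ Ioi (0:ℝ), ∀ y ∈ Ioi (0:ℝ),
      ∫ t in x..y, deriv (deriv f) t = deriv f y - deriv f x :=
    fun x hx y hy => intervalIntegral.integral_eq_sub_of_hasDerivAt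
      (fun t ht => hg1d t (huIcc hx hy ht)) (hg2int x hx y hy)
  have hsplit : ∀ n : ℕ, ∀ x ∈ Ioi (0:ℝ), ∀ y ∈ Ioi (0:ℝ),
      auxφ f n y - auxφ f n x = ∫ t in x..y, deriv (deriv f) t * auxθ n t := by
    intro n x hx y hy
    have h := intervalIntegral.integral_add_adjacent_intervals
      (hgint n 1 h1mem x hx) (hgint n x hx y hy)
    simp only [auxφ]
    linarith
  have hcmp : ∀ n : ℕ, ∀ x ∈ Ioi (0:ℝ), ∀ y ∈ Ioi (0:ℝ), x ≤ y →
      0 ≤ auxφ f n y - auxφ f n x ∧ auxφ f n y - auxφ f n x ≤ deriv f y - deriv f x := by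
    intro n x hx y hy hxy
    have hx0 : (0:ℝ) < x := hx
    have hmem : ∀ u ∈ Icc x y, u ∈ Ioi (0:ℝ) := fun u hu => lt_of_lt_of_le hx0 hu.1
    constructor
    · rw [hsplit n x hx y hy]
      exact intervalIntegral.integral_nonneg hxy
        (fun u hu => mul_nonneg (hg2nn u (hmem u hu)) (auxθ_nonneg n u))
    · rw [hsplit n x hx y hy, ← hFTC x hx y hy]
      exact intervalIntegral.integral_mono_on hxy (hgint n x hx y hy) (hg2int x hx y hy)
        (fun u hu => mul_le_of_le_one_right (hg2nn u (hmem u hu)) (auxθ_le_one n u))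
  have hone : ∀ n : ℕ, auxφ f n 1 = deriv f 1 := by
    intro n; simp [auxφ]
  have hderiv : ∀ n : ℕ, ∀ x ∈ Ioi (0:ℝ),
      HasDerivAt (auxφ f n) (deriv (deriv f) x * auxθ n x) x := by
    intro n x hx
    have hca : ∀ z ∈ Ioi (0:ℝ), ContinuousAt (fun t => deriv (deriv f) t * auxθ n t) z :=
      fun z hz => (hgcont n).continuousAt (hopen.mem_nhds hz)
    have h := intervalIntegral.integral_hasDerivAt_right (hgint n 1 h1mem x hx)
      (ContinuousAt.stronglyMeasurableAtFilter hopen hca x hx) (hca x hx)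
    exact h.const_add (deriv f 1)
  have hφderiv : ∀ n : ℕ, ∀ x ∈ Ioi (0:ℝ),
      deriv (auxφ f n) x = deriv (deriv f) x * auxθ n x :=
    fun n x hx => (hderiv n x hx).deriv
  refine ⟨2*|deriv f 1|, by positivity, 1, le_rfl, fun n => auxφ f n, ?_, ?_⟩
  · -- first bullet
    intro n hn
    have hn' : (1:ℝ) ≤ (n:ℝ) := by exact_mod_cast hn
    have hamem : 1/((n:ℝ)+1) ∈ Ioi (0:ℝ) := by
      simp only [mem_Ioi]; positivity
    have hbmem : (n:ℝ)+1 ∈ Ioi (0:ℝ) := by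
      simp only [mem_Ioi]; linarith
    have hab : 1/((n:ℝ)+1) ≤ (n:ℝ)+1 := by
      rw [div_le_iff₀ (by linarith)]; nlinarith
    refine ⟨⟨|auxφ f n (1/((n:ℝ)+1))| + |auxφ f n ((n:ℝ)+1)|, ?_⟩, ?_, ?_, ?_⟩
    · -- boundedness
      intro x hx
      have hx0 : (0:ℝ) < x := hx
      have hlow : auxφ f n (1/((n:ℝ)+1)) ≤ auxφ f n x := by
        rcases le_total x (1/((n:ℝ)+1)) with h | h
        · have : auxφ f n (1/((n:ℝ)+1)) - auxφ f n x = 0 := by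
            rw [hsplit n x hx _ hamem]
            rw [intervalIntegral.integral_congr (g := fun _ => (0:ℝ))
              (fun t ht => ?_)]
            · simp
            · rw [uIcc_of_le h] at ht
              simp [auxθ_eq_zero_left ht.2]
          linarith
        · linarith [(hcmp n _ hamem x hx h).1]
      have hhigh : auxφ f n x ≤ auxφ f n ((n:ℝ)+1) := by
        rcases le_total x ((n:ℝ)+1) with h | h
        · linarith [(hcmp n x hx _ hbmem h).1]
        · have : auxφ f n x - auxφ f n ((n:ℝ)+1) = 0 := by
            rw [hsplit n _ hbmem x hx]
            rw [intervalIntegral.integral_congr (g := fun _ => (0:ℝ))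
              (fun t ht => ?_)]
            · simp
            · rw [uIcc_of_le h] at ht
              simp [auxθ_eq_zero_right ht.1]
          linarith
      refine abs_le.2 ⟨?_, ?_⟩
      · linarith [neg_abs_le (auxφ f n (1/((n:ℝ)+1))), abs_nonneg (auxφ f n ((n:ℝ)+1))]
      · linarith [le_abs_self (auxφ f n ((n:ℝ)+1)), abs_nonneg (auxφ f n (1/((n:ℝ)+1)))]
    · -- monotone
      intro x hx y hy hxy
      linarith [(hcmp n x hx y hy hxy).1]
    · -- C²
      rw [show (2 : WithTop ℕ∞) = 1 + 1 from rfl, contDiffOn_succ_iff_deriv_of_isOpen hopen]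
      refine ⟨fun x hx => (hderiv n x hx).differentiableAt.differentiableWithinAt, by simp, ?_⟩
      exact (hg2C.mul ((auxθ_contDiff n).of_le (by norm_num)).contDiffOn).congr
        (fun x hx => hφderiv n x hx)
    · -- coincidence with deriv f on [1/n, n]
      intro x hx
      have hn0 : (0:ℝ) < (n:ℝ) := by linarith
      have hx0 : x ∈ Ioi (0:ℝ) := lt_of_lt_of_le (by positivity) hx.1
      have h1n : (1:ℝ) ∈ Icc (1/(n:ℝ)) (n:ℝ) :=
        ⟨by rw [div_le_one hn0]; exact hn', hn'⟩
      have hsub : uIcc (1:ℝ) x ⊆ Icc (1/(n:ℝ)) (n:ℝ) := uIcc_subset_Icc h1n hx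
      have hcg : ∫ t in (1:ℝ)..x, deriv (deriv f) t * auxθ n t
          = ∫ t in (1:ℝ)..x, deriv (deriv f) t :=
        intervalIntegral.integral_congr
          (fun t ht => by rw [auxθ_eq_one hn (hsub ht), mul_one])
      simp only [auxφ]
      rw [hcg, hFTC 1 h1mem x hx0]
      ring
  · -- second bullet
    intro n hn x hx y hy
    have hx0 : (0:ℝ) < x := hx
    have hy0 : (0:ℝ) < y := hy
    refine ⟨?_, ?_, ?_⟩
    · -- |φ x| ≤ 4 |f' x| + 2|f' 1|
      have h1 := hone n
      refine abs_le.2 ⟨?_, ?_⟩ <;>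
      · rcases le_total x 1 with h | h
        · have hc := hcmp n x hx 1 h1mem h
          nlinarith [le_abs_self (deriv f x), neg_abs_le (deriv f x),
            le_abs_self (deriv f 1), neg_abs_le (deriv f 1),
            abs_nonneg (deriv f x), abs_nonneg (deriv f 1)]
        · have hc := hcmp n 1 h1mem x hx h
          nlinarith [le_abs_self (deriv f x), neg_abs_le (deriv f x),
            le_abs_self (deriv f 1), neg_abs_le (deriv f 1),
            abs_nonneg (deriv f x), abs_nonneg (deriv f 1)]
    · -- derivative bound
      rw [hφderiv n x hx, abs_of_nonneg (mul_nonneg (hg2nn x hx) (auxθ_nonneg n x))]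
      nlinarith [mul_le_of_le_one_right (hg2nn x hx) (auxθ_le_one n x), hg2nn x hx]
    · -- Lipschitz-type bound
      rcases le_total x y with h | h
      · have hc := hcmp n x hx y hy h
        rw [abs_sub_comm, abs_of_nonneg hc.1, abs_sub_comm (deriv f x)]
        linarith [le_abs_self (deriv f y - deriv f x), abs_nonneg (deriv f y - deriv f x)]
      · have hc := hcmp n y hy x hx h
        rw [abs_of_nonneg hc.1]
        linarith [le_abs_self (deriv f x - deriv f y), abs_nonneg (deriv f x - deriv f y)]
end

section
/- Let f : (0,∞) → ℝ be strictly convex and of class C³. For an integer n ≥ 1 define Aₙ(x) = f'(1/n) − ∫_{x ∨ 1/(2n)}^{1/n} f''(t)(2nt − 1)²(5 − 4nt) dt, Bₙ(x) = f'(n) + ∫_{n}^{x ∧ (n+1)} f''(t)(n + 1 − t)²(1 + 2t − 2n) dt, and φₙ(x) = Aₙ(x) for 0 < x < 1/n, φₙ(x) = f'(x) for 1/n ≤ x ≤ n, φₙ(x) = Bₙ(x) for x > n. Then φₙ is twice continuously differentiable on (0,∞), bounded, nondecreasing, coincides with f' on [1/n, n], and satisfies 0 ≤ φₙ'(x) ≤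 3 f''(x) for all x > 0. -/
open Set intervalIntegral


noncomputable def sClamp (u : ℝ) : ℝ := max 0 (min u 1)
noncomputable def sKer (u : ℝ) : ℝ := 6 * sClamp u * (1 - sClamp u)
noncomputable def sFun (u : ℝ) : ℝ := ∫ v in (0:ℝ)..u, sKer v

lemma sClamp_cont : Continuous sClamp :=
  continuous_const.max (continuous_id.min continuous_const)

lemma sKer_cont : Continuous sKer :=
  (continuous_const.mul sClamp_cont).mul (continuous_const.sub sClamp_cont)

lemma sClamp_nonneg (u : ℝ) : 0 ≤ sClamp u := le_max_left _ _

lemma sClamp_le_one (u : ℝ) : sClamp u ≤ 1 :=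
  max_le (by norm_num) (min_le_right _ _)

lemma sKer_nonneg (u : ℝ) : 0 ≤ sKer u :=
  mul_nonneg (mul_nonneg (by norm_num) (sClamp_nonneg u))
    (by linarith [sClamp_le_one u])

lemma sFun_hasDerivAt (u : ℝ) : HasDerivAt sFun (sKer u) u :=
  (sKer_cont.integral_hasStrictDerivAt 0 u).hasDerivAt

lemma sFun_contDiff : ContDiff ℝ 1 sFun := by
  rw [contDiff_one_iff_deriv]
  refine ⟨fun u => (sFun_hasDerivAt u).differentiableAt, ?_⟩
  have : deriv sFun = sKer := funext fun u => (sFun_hasDerivAt u).deriv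
  rw [this]; exact sKer_cont

lemma sFun_mono : Monotone sFun :=
  monotone_of_deriv_nonneg (fun u => (sFun_hasDerivAt u).differentiableAt)
    (fun u => by rw [(sFun_hasDerivAt u).deriv]; exact sKer_nonneg u)

lemma sFun_of_nonpos {u : ℝ} (hu : u ≤ 0) : sFun u = 0 := by
  have h : EqOn sKer (fun _ => (0:ℝ)) (uIcc 0 u) := by
    intro v hv
    rw [uIcc_of_ge hu, mem_Icc] at hv
    have hc : sClamp v = 0 := by
      unfold sClamp
      rw [min_eq_left (by linarith [hv.2] : v ≤ 1), max_eq_left (by linarith [hv.2])]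
    simp [sKer, hc]
  unfold sFun
  rw [intervalIntegral.integral_congr h, intervalIntegral.integral_zero]

lemma sFun_of_mem {u : ℝ} (h0 : 0 ≤ u) (h1 : u ≤ 1) : sFun u = u ^ 2 * (3 - 2 * u) := by
  have h : EqOn sKer (fun v => 6 * v - 6 * v ^ 2) (uIcc 0 u) := by
    intro v hv
    rw [uIcc_of_le h0, mem_Icc] at hv
    have hc : sClamp v = v := by
      unfold sClamp
      rw [min_eq_left (hv.2.trans h1), max_eq_right hv.1]
    simp only [sKer, hc]; ring
  unfold sFun
  rw [intervalIntegral.integral_congr h,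
    intervalIntegral.integral_sub ((by fun_prop : Continuous fun v:ℝ => 6*v).intervalIntegrable _ _)
      ((by fun_prop : Continuous fun v:ℝ => 6*v^2).intervalIntegrable _ _),
    intervalIntegral.integral_const_mul, intervalIntegral.integral_const_mul,
    integral_id, integral_pow]
  norm_num; ring

lemma sFun_of_ge {u : ℝ} (h : 1 ≤ u) : sFun u = 1 := by
  have hs : sFun 1 + (∫ v in (1:ℝ)..u, sKer v) = sFun u :=
    intervalIntegral.integral_add_adjacent_intervals (sKer_cont.intervalIntegrable _ _)
      (sKer_cont.intervalIntegrable _ _)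
  have hz : (∫ v in (1:ℝ)..u, sKer v) = 0 := by
    have h' : EqOn sKer (fun _ => (0:ℝ)) (uIcc 1 u) := by
      intro v hv
      rw [uIcc_of_le h, mem_Icc] at hv
      have hc : sClamp v = 1 := by
        unfold sClamp
        rw [min_eq_right hv.1, max_eq_right (by norm_num : (0:ℝ) ≤ 1)]
      simp [sKer, hc]
    rw [intervalIntegral.integral_congr h', intervalIntegral.integral_zero]
  have h1 : sFun 1 = 1 := by rw [sFun_of_mem (by norm_num) le_rfl]; norm_num
  linarith [hs]

lemma sFun_nonneg (u : ℝ) : 0 ≤ sFun u := by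
  rcases le_or_gt u 0 with h | h
  · rw [sFun_of_nonpos h]
  · calc (0:ℝ) = sFun 0 := (sFun_of_nonpos le_rfl).symm
      _ ≤ sFun u := sFun_mono h.le

lemma sFun_le_one (u : ℝ) : sFun u ≤ 1 := by
  rcases le_or_gt u 1 with h | h
  · calc sFun u ≤ sFun 1 := sFun_mono h
      _ = 1 := sFun_of_ge le_rfl
  · rw [sFun_of_ge h.le]

/-- The explicit construction in Lemma 1 of the paper: for `f` strictly convex and
`C³` on `(0,∞)` and `n ≥ 1`, the function
`φₙ(x) = Aₙ(x)` for `0 < x < 1/n`, `φₙ(x) = f'(x)` for `1/n ≤ x ≤ n`,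
`φₙ(x) = Bₙ(x)` for `x > n`, where
`Aₙ(x) = f'(1/n) − ∫_{x ∨ 1/(2n)}^{1/n} f''(t)(2nt − 1)²(5 − 4nt) dt` and
`Bₙ(x) = f'(n) + ∫_n^{x ∧ (n+1)} f''(t)(n+1−t)²(1+2t−2n) dt`,
is `C²` on `(0,∞)`, bounded, nondecreasing, coincides with `f'` on `[1/n, n]`
and satisfies `0 ≤ φₙ'(x) ≤ 3 f''(x)` for all `x > 0`. -/
theorem stmt_3 (f : ℝ → ℝ)
    (hconv : StrictConvexOn ℝ (Set.Ioi (0 : ℝ)) f)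
    (hC3 : ContDiffOn ℝ 3 f (Set.Ioi (0 : ℝ)))
    (n : ℕ) (hn : 1 ≤ n) (A B φ : ℝ → ℝ)
    (hA : ∀ x : ℝ, A x = deriv f (1 / (n : ℝ)) -
      ∫ t in (max x (1 / (2 * (n : ℝ))))..(1 / (n : ℝ)),
        deriv (deriv f) t * ((2 * (n : ℝ) * t - 1) ^ 2 * (5 - 4 * (n : ℝ) * t)))
    (hB : ∀ x : ℝ, B x = deriv f (n : ℝ) +
      ∫ t in (n : ℝ)..(min x ((n : ℝ) + 1)),
        deriv (deriv f) t * (((n : ℝ) + 1 - t) ^ 2 * (1 + 2 * t - 2 * (n : ℝ))))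
    (hφ : ∀ x : ℝ, 0 < x →
      φ x = if x < 1 / (n : ℝ) then A x
        else if x ≤ (n : ℝ) then deriv f x else B x) :
    ContDiffOn ℝ 2 φ (Set.Ioi (0 : ℝ)) ∧
    (∃ C : ℝ, ∀ x ∈ Set.Ioi (0 : ℝ), |φ x| ≤ C) ∧
    MonotoneOn φ (Set.Ioi (0 : ℝ)) ∧
    (∀ x ∈ Set.Icc (1 / (n : ℝ)) (n : ℝ), φ x = deriv f x) ∧
    (∀ x ∈ Set.Ioi (0 : ℝ),
      0 ≤ deriv φ x ∧ deriv φ x ≤ 3 * deriv (deriv f) x) := by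
  have hN : (1:ℝ) ≤ (n:ℝ) := by exact_mod_cast hn
  have hNpos : (0:ℝ) < (n:ℝ) := by linarith
  have h1N : (0:ℝ) < 1/(n:ℝ) := by positivity
  have h12N : (0:ℝ) < 1/(2*(n:ℝ)) := by positivity
  have hhalf : 1/(2*(n:ℝ)) ≤ 1/(n:ℝ) := by
    rw [div_le_div_iff₀ (by positivity) hNpos]; nlinarith
  have hinvN : 1/(n:ℝ) ≤ (n:ℝ) := by
    rw [div_le_iff₀ hNpos]; nlinarith
  set W : ℝ → ℝ := fun t => sFun (2*(n:ℝ)*t - 1) - sFun (t - (n:ℝ)) with hWdef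
  set HW : ℝ → ℝ := fun t => deriv (deriv f) t * W t with hHWdef
  -- values of W
  have hW0 : ∀ t : ℝ, t ≤ 1/(2*(n:ℝ)) → W t = 0 := by
    intro t ht
    have h1 : 2*(n:ℝ)*t - 1 ≤ 0 := by
      have := (le_div_iff₀ (by positivity : (0:ℝ) < 2*(n:ℝ))).1 ht
      nlinarith
    have h2 : t - (n:ℝ) ≤ 0 := by
      have : t ≤ (n:ℝ) := le_trans ht (le_trans hhalf hinvN)
      linarith
    simp only [hWdef, sFun_of_nonpos h1, sFun_of_nonpos h2, sub_zero]
  have hWm1 : ∀ t : ℝ, 1/(2*(n:ℝ)) ≤ t → t ≤ 1/(n:ℝ) →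
      W t = (2 * (n : ℝ) * t - 1) ^ 2 * (5 - 4 * (n : ℝ) * t) := by
    intro t h1 h2
    have ha : 0 ≤ 2*(n:ℝ)*t - 1 := by
      have := (div_le_iff₀ (by positivity : (0:ℝ) < 2*(n:ℝ))).1 h1
      nlinarith
    have hb : 2*(n:ℝ)*t - 1 ≤ 1 := by
      have := (le_div_iff₀ hNpos).1 h2
      nlinarith
    have hc : t - (n:ℝ) ≤ 0 := by linarith [h2.trans hinvN]
    simp only [hWdef, sFun_of_mem ha hb, sFun_of_nonpos hc, sub_zero]
    ring
  have hW1 : ∀ t : ℝ, 1/(n:ℝ) ≤ t → t ≤ (n:ℝ) → W t = 1 := by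
    intro t h1 h2
    have ha : (1:ℝ) ≤ 2*(n:ℝ)*t - 1 := by
      have := (div_le_iff₀ hNpos).1 h1
      nlinarith
    have hc : t - (n:ℝ) ≤ 0 := by linarith
    simp only [hWdef, sFun_of_ge ha, sFun_of_nonpos hc, sub_zero]
  have hWm2 : ∀ t : ℝ, (n:ℝ) ≤ t → t ≤ (n:ℝ)+1 →
      W t = ((n : ℝ) + 1 - t) ^ 2 * (1 + 2 * t - 2 * (n : ℝ)) := by
    intro t h1 h2
    have ha : (1:ℝ) ≤ 2*(n:ℝ)*t - 1 := by nlinarith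
    have hb0 : 0 ≤ t - (n:ℝ) := by linarith
    have hb1 : t - (n:ℝ) ≤ 1 := by linarith
    simp only [hWdef, sFun_of_ge ha, sFun_of_mem hb0 hb1]
    ring
  have hW5 : ∀ t : ℝ, (n:ℝ)+1 ≤ t → W t = 0 := by
    intro t ht
    have ha : (1:ℝ) ≤ 2*(n:ℝ)*t - 1 := by nlinarith
    have hb : (1:ℝ) ≤ t - (n:ℝ) := by linarith
    simp only [hWdef, sFun_of_ge ha, sFun_of_ge hb, sub_self]
  have hWnn : ∀ t : ℝ, 0 < t → 0 ≤ W t := by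
    intro t ht
    have : t - (n:ℝ) ≤ 2*(n:ℝ)*t - 1 := by nlinarith
    simpa only [hWdef, sub_nonneg] using sFun_mono this
  have hWle1 : ∀ t : ℝ, W t ≤ 1 := by
    intro t
    have h1 := sFun_le_one (2*(n:ℝ)*t - 1)
    have h2 := sFun_nonneg (t - (n:ℝ))
    simp only [hWdef]; linarith
  have hWcont : Continuous W :=
    (sFun_contDiff.continuous.comp (by fun_prop)).sub
      (sFun_contDiff.continuous.comp (by fun_prop))
  have hWC1 : ContDiff ℝ 1 W :=
    (sFun_contDiff.comp (by fun_prop)).sub (sFun_contDiff.comp (by fun_prop))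
  -- smoothness facts on f
  have hg2 : ContDiffOn ℝ 2 (deriv f) (Set.Ioi (0:ℝ)) :=
    hC3.deriv_of_isOpen isOpen_Ioi (by norm_num)
  have hh1 : ContDiffOn ℝ 1 (deriv (deriv f)) (Set.Ioi (0:ℝ)) :=
    hg2.deriv_of_isOpen isOpen_Ioi (by norm_num)
  have hhc : ContinuousOn (deriv (deriv f)) (Set.Ioi (0:ℝ)) := hh1.continuousOn
  have hgd : ∀ x ∈ Set.Ioi (0:ℝ), HasDerivAt (deriv f) (deriv (deriv f) x) x := by
    intro x hx
    exact ((hg2.differentiableOn (by norm_num)).differentiableAt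
      (isOpen_Ioi.mem_nhds hx)).hasDerivAt
  have hfd : ∀ x ∈ Set.Ioi (0:ℝ), DifferentiableAt ℝ f x := fun x hx =>
    (hC3.differentiableOn (by norm_num)).differentiableAt (isOpen_Ioi.mem_nhds hx)
  have hgmono : MonotoneOn (deriv f) (Set.Ioi (0:ℝ)) :=
    hconv.convexOn.monotoneOn_deriv hfd
  have hpos : ∀ x ∈ Set.Ioi (0:ℝ), 0 ≤ deriv (deriv f) x := by
    intro x hx
    have hd := hgd x hx
    rw [hasDerivAt_iff_tendsto_slope] at hd
    have hne : nhdsWithin x (Set.Ioi x) ≤ nhdsWithin x {x}ᶜ :=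
      nhdsWithin_mono x (fun y hy => ne_of_gt hy)
    refine ge_of_tendsto (hd.mono_left hne) ?_
    filter_upwards [self_mem_nhdsWithin,
      mem_nhdsWithin_of_mem_nhds (isOpen_Ioi.mem_nhds hx)] with y hy hy0
    rw [slope_def_field]
    have hmn := hgmono hx hy0 (le_of_lt hy)
    have hxy : (0:ℝ) < y - x := by simpa using sub_pos.2 (Set.mem_Ioi.1 hy)
    exact div_nonneg (by linarith) hxy.le
  -- integrability helpers
  have hsubI : ∀ a b : ℝ, 0 < a → 0 < b → Set.uIcc a b ⊆ Set.Ioi 0 := by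
    intro a b ha hb t ht
    rw [Set.mem_uIcc] at ht
    rcases ht with ⟨h1, _⟩ | ⟨h1, _⟩ <;> [exact lt_of_lt_of_le ha h1; exact lt_of_lt_of_le hb h1]
  have hFTC : ∀ a b : ℝ, 0 < a → 0 < b →
      (∫ t in a..b, deriv (deriv f) t) = deriv f b - deriv f a := by
    intro a b ha hb
    exact intervalIntegral.integral_eq_sub_of_hasDerivAt
      (fun t ht => hgd t (hsubI a b ha hb ht))
      ((hhc.mono (hsubI a b ha hb)).intervalIntegrable)
  have hHWc : ContinuousOn HW (Set.Ioi (0:ℝ)) := hhc.mul hWcont.continuousOn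
  have hHWi : ∀ a b : ℝ, 0 < a → 0 < b →
      IntervalIntegrable HW MeasureTheory.volume a b := fun a b ha hb =>
    (hHWc.mono (hsubI a b ha hb)).intervalIntegrable
  -- key representation
  have key : ∀ x : ℝ, 0 < x → φ x = deriv f (1/(n:ℝ)) + ∫ t in (1/(n:ℝ))..x, HW t := by
    intro x hx
    rw [hφ x hx]
    by_cases hx1 : x < 1/(n:ℝ)
    · rw [if_pos hx1, hA x]
      set a := max x (1/(2*(n:ℝ))) with ha
      have ha0 : 0 < a := lt_of_lt_of_le h12N (le_max_right _ _)
      have ha2 : 1/(2*(n:ℝ)) ≤ a := le_max_right _ _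
      have haN : a ≤ 1/(n:ℝ) := max_le hx1.le hhalf
      have hsplit : (∫ t in (1/(n:ℝ))..x, HW t)
          = (∫ t in (1/(n:ℝ))..a, HW t) + ∫ t in a..x, HW t :=
        (intervalIntegral.integral_add_adjacent_intervals (hHWi _ _ h1N ha0)
          (hHWi _ _ ha0 hx)).symm
      have hz : (∫ t in a..x, HW t) = 0 := by
        rcases le_or_gt (1/(2*(n:ℝ))) x with hc | hc
        · rw [show a = x from max_eq_left hc]
          simp
        · have hax' : a = 1/(2*(n:ℝ)) := max_eq_right hc.le
          have he : Set.EqOn HW (fun _ => (0:ℝ)) (Set.uIcc a x) := by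
            intro t ht
            rw [Set.mem_uIcc] at ht
            have htle : t ≤ 1/(2*(n:ℝ)) := by
              rcases ht with ⟨h1', h2'⟩ | ⟨h1', h2'⟩
              · linarith [hc.le]
              · rw [hax'] at h2'; linarith
            simp only [hHWdef, hW0 t htle, mul_zero]
          rw [intervalIntegral.integral_congr he, intervalIntegral.integral_zero]
      have hcongr : (∫ t in a..(1/(n:ℝ)), HW t)
          = ∫ t in a..(1/(n:ℝ)),
              deriv (deriv f) t * ((2 * (n : ℝ) * t - 1) ^ 2 * (5 - 4 * (n : ℝ) * t)) := by
        apply intervalIntegral.integral_congr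
        intro t ht
        rw [Set.uIcc_of_le haN, Set.mem_Icc] at ht
        simp only [hHWdef]
        rw [hWm1 t (le_trans ha2 ht.1) ht.2]
      have hsymm : (∫ t in (1/(n:ℝ))..a, HW t) = -∫ t in a..(1/(n:ℝ)), HW t :=
        intervalIntegral.integral_symm _ _
      rw [hsplit, hz, add_zero, hsymm, hcongr]
      ring
    · rw [if_neg hx1]
      push_neg at hx1
      by_cases hx2 : x ≤ (n:ℝ)
      · rw [if_pos hx2]
        have hcongr : (∫ t in (1/(n:ℝ))..x, HW t)
            = ∫ t in (1/(n:ℝ))..x, deriv (deriv f) t := by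
          apply intervalIntegral.integral_congr
          intro t ht
          rw [Set.uIcc_of_le hx1, Set.mem_Icc] at ht
          simp only [hHWdef]
          rw [hW1 t ht.1 (ht.2.trans hx2), mul_one]
        rw [hcongr, hFTC _ _ h1N hx]
        ring
      · rw [if_neg hx2, hB x]
        push_neg at hx2
        set b := min x ((n:ℝ)+1) with hb
        have hb0 : 0 < b := lt_min hx (by positivity)
        have hbn : (n:ℝ) ≤ b := le_min hx2.le (by linarith)
        have hbn1 : b ≤ (n:ℝ)+1 := min_le_right _ _
        have hsplit : (∫ t in (1/(n:ℝ))..x, HW t)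
            = ((∫ t in (1/(n:ℝ))..(n:ℝ), HW t) + ∫ t in (n:ℝ)..b, HW t)
              + ∫ t in b..x, HW t := by
          rw [intervalIntegral.integral_add_adjacent_intervals (hHWi _ _ h1N hNpos)
              (hHWi _ _ hNpos hb0),
            intervalIntegral.integral_add_adjacent_intervals (hHWi _ _ h1N hb0)
              (hHWi _ _ hb0 hx)]
        have h1 : (∫ t in (1/(n:ℝ))..(n:ℝ), HW t) = deriv f (n:ℝ) - deriv f (1/(n:ℝ)) := by
          have hcongr : (∫ t in (1/(n:ℝ))..(n:ℝ), HW t)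
              = ∫ t in (1/(n:ℝ))..(n:ℝ), deriv (deriv f) t := by
            apply intervalIntegral.integral_congr
            intro t ht
            rw [Set.uIcc_of_le hinvN, Set.mem_Icc] at ht
            simp only [hHWdef]
            rw [hW1 t ht.1 ht.2, mul_one]
          rw [hcongr, hFTC _ _ h1N hNpos]
        have h2 : (∫ t in b..x, HW t) = 0 := by
          rcases le_or_gt x ((n:ℝ)+1) with hc | hc
          · rw [show b = x from min_eq_left hc]
            simp
          · have hbx : b = (n:ℝ)+1 := min_eq_right hc.le
            have he : Set.EqOn HW (fun _ => (0:ℝ)) (Set.uIcc b x) := by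
              intro t ht
              rw [Set.mem_uIcc] at ht
              have htge : (n:ℝ)+1 ≤ t := by
                rcases ht with ⟨h1', h2'⟩ | ⟨h1', h2'⟩
                · rw [hbx] at h1'; linarith
                · linarith [hc.le.trans h1']
              simp only [hHWdef, hW5 t htge, mul_zero]
            rw [intervalIntegral.integral_congr he, intervalIntegral.integral_zero]
        have h3 : (∫ t in (n:ℝ)..b, HW t)
            = ∫ t in (n:ℝ)..b,
                deriv (deriv f) t * (((n : ℝ) + 1 - t) ^ 2 * (1 + 2 * t - 2 * (n : ℝ))) := by
          apply intervalIntegral.integral_congr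
          intro t ht
          rw [Set.uIcc_of_le hbn, Set.mem_Icc] at ht
          simp only [hHWdef]
          rw [hWm2 t ht.1 (ht.2.trans hbn1)]
        rw [hsplit, h1, h2, h3]
        ring
  -- derivative of φ
  have hφd : ∀ x ∈ Set.Ioi (0:ℝ), HasDerivAt φ (HW x) x := by
    intro x hx
    have hev : φ =ᶠ[nhds x] fun y => deriv f (1/(n:ℝ)) + ∫ t in (1/(n:ℝ))..y, HW t := by
      filter_upwards [isOpen_Ioi.mem_nhds hx] with y hy
      exact key y hy
    have hF : HasDerivAt (fun y => deriv f (1/(n:ℝ)) + ∫ t in (1/(n:ℝ))..y, HW t) (HW x) x := by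
      have := intervalIntegral.integral_hasDerivAt_right (hHWi _ _ h1N hx)
        (hHWc.stronglyMeasurableAtFilter isOpen_Ioi x hx)
        (hHWc.continuousAt (isOpen_Ioi.mem_nhds hx))
      exact this.const_add _
    exact hF.congr_of_eventuallyEq hev
  have hderiv : ∀ x ∈ Set.Ioi (0:ℝ), deriv φ x = HW x := fun x hx => (hφd x hx).deriv
  have hmono : MonotoneOn φ (Set.Ioi (0:ℝ)) := by
    apply monotoneOn_of_deriv_nonneg (convex_Ioi 0)
    · exact fun x hx => (hφd x hx).continuousAt.continuousWithinAt
    · intro x hx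
      rw [interior_Ioi] at hx
      exact (hφd x hx).differentiableAt.differentiableWithinAt
    · intro x hx
      rw [interior_Ioi] at hx
      rw [hderiv x hx]
      exact mul_nonneg (hpos x hx) (hWnn x hx)
  refine ⟨?_, ?_, hmono, ?_, ?_⟩
  · rw [show (2 : WithTop ℕ∞) = 1 + 1 by norm_num,
      contDiffOn_succ_iff_deriv_of_isOpen isOpen_Ioi]
    refine ⟨fun x hx => (hφd x hx).differentiableAt.differentiableWithinAt, by simp, ?_⟩
    exact (hh1.mul hWC1.contDiffOn).congr hderiv
  · have hlow : ∀ x : ℝ, 0 < x → x ≤ 1/(2*(n:ℝ)) → φ x = φ (1/(2*(n:ℝ))) := by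
      intro x hx hx2
      rw [key x hx, key _ h12N]
      congr 1
      rw [← intervalIntegral.integral_add_adjacent_intervals (hHWi _ _ h1N h12N)
        (hHWi _ _ h12N hx)]
      have he : Set.EqOn HW (fun _ => (0:ℝ)) (Set.uIcc (1/(2*(n:ℝ))) x) := by
        intro t ht
        rw [Set.mem_uIcc] at ht
        have htle : t ≤ 1/(2*(n:ℝ)) := by
          rcases ht with ⟨h1', h2'⟩ | ⟨h1', h2'⟩ <;> linarith
        simp only [hHWdef, hW0 t htle, mul_zero]
      rw [intervalIntegral.integral_congr he, intervalIntegral.integral_zero, add_zero]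
    have hhigh : ∀ x : ℝ, (n:ℝ)+1 ≤ x → φ x = φ ((n:ℝ)+1) := by
      intro x hx2
      have hx : (0:ℝ) < x := lt_of_lt_of_le (by positivity) hx2
      rw [key x hx, key _ (by positivity : (0:ℝ) < (n:ℝ)+1)]
      congr 1
      rw [← intervalIntegral.integral_add_adjacent_intervals
        (hHWi _ _ h1N (by positivity : (0:ℝ) < (n:ℝ)+1)) (hHWi _ _ (by positivity) hx)]
      have he : Set.EqOn HW (fun _ => (0:ℝ)) (Set.uIcc ((n:ℝ)+1) x) := by
        intro t ht
        rw [Set.mem_uIcc] at ht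
        have htge : (n:ℝ)+1 ≤ t := by
          rcases ht with ⟨h1', h2'⟩ | ⟨h1', h2'⟩ <;> linarith
        simp only [hHWdef, hW5 t htge, mul_zero]
      rw [intervalIntegral.integral_congr he, intervalIntegral.integral_zero, add_zero]
    refine ⟨max |φ (1/(2*(n:ℝ)))| |φ ((n:ℝ)+1)|, ?_⟩
    intro x hx
    rcases le_or_gt x (1/(2*(n:ℝ))) with h1 | h1
    · rw [hlow x hx h1]; exact le_max_left _ _
    rcases le_or_gt ((n:ℝ)+1) x with h2 | h2
    · rw [hhigh x h2]; exact le_max_right _ _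
    · have hl := hmono (Set.mem_Ioi.2 h12N) hx h1.le
      have hr := hmono hx (Set.mem_Ioi.2 (by positivity : (0:ℝ) < (n:ℝ)+1)) h2.le
      refine abs_le.2 ⟨?_, ?_⟩
      · have h3 := neg_abs_le (φ (1/(2*(n:ℝ))))
        have h4 := le_max_left |φ (1/(2*(n:ℝ)))| |φ ((n:ℝ)+1)|
        linarith
      · have h3 := le_abs_self (φ ((n:ℝ)+1))
        have h4 := le_max_right |φ (1/(2*(n:ℝ)))| |φ ((n:ℝ)+1)|
        linarith
  · intro x hx
    have hx0 : 0 < x := lt_of_lt_of_le h1N hx.1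
    rw [hφ x hx0, if_neg (not_lt.2 hx.1), if_pos hx.2]
  · intro x hx
    rw [hderiv x hx]
    have h0 := hpos x hx
    have h1 := hWnn x hx
    have h2 := hWle1 x
    constructor
    · exact mul_nonneg h0 h1
    · simp only [hHWdef]
      nlinarith
end

section
/- Let (Ω, 𝔉, P) be a probability space, Z a random variable with Z > 0 P-a.s., and g : (0,∞) → ℝ a continuous strictly increasing function such that g(λZ) is P-integrable for every λ > 0 and g(x) → −∞ as x → 0⁺. Set S = lim_{x→+∞} g(x) ∈ ℝ ∪ {+∞}. Then for every real x with x < S there exists a unique λ > 0 such that E[g(λZ)] = x. -/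
open Set Filter MeasureTheory

/-- If `Z > 0` a.s., `g` is continuous and strictly increasing on `(0,∞)`,
`g(λZ)` is integrable for every `λ > 0`, `g(x) → −∞` as `x → 0⁺` and
`S = lim_{x→+∞} g(x)` in the extended reals, then for every real `x < S` there
is a unique `λ > 0` with `E[g(λZ)] = x`. -/
theorem stmt_12 {Ω : Type*} [MeasurableSpace Ω] (P : Measure Ω)
    [IsProbabilityMeasure P] (Z : Ω → ℝ) (hZmeas : Measurable Z)
    (hZpos : ∀ᵐ ω ∂P, 0 < Z ω) (g : ℝ → ℝ)
    (hgcont : ContinuousOn g (Set.Ioi (0 : ℝ)))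
    (hgmono : StrictMonoOn g (Set.Ioi (0 : ℝ)))
    (hint : ∀ l : ℝ, 0 < l → Integrable (fun ω => g (l * Z ω)) P)
    (hg0 : Tendsto g (nhdsWithin 0 (Set.Ioi 0)) atBot)
    (S : EReal)
    (hlim : Tendsto (fun x : ℝ => ((g x : ℝ) : EReal)) atTop (nhds S)) :
    ∀ x : ℝ, (x : EReal) < S →
      ∃! l : ℝ, 0 < l ∧ ∫ ω, g (l * Z ω) ∂P = x := by
  intro x hxS
  set φ : ℝ → ℝ := fun l => ∫ ω, g (l * Z ω) ∂P with hφ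
  have hgZint : Integrable (fun ω => g (Z ω)) P := by
    simpa using hint 1 one_pos
  -- a.e. pointwise comparison
  have hcomp : ∀ l1 l2 : ℝ, 0 < l1 → l1 ≤ l2 →
      ∀ᵐ ω ∂P, g (l1 * Z ω) ≤ g (l2 * Z ω) := by
    intro l1 l2 h1 h12
    filter_upwards [hZpos] with ω hω
    exact (hgmono.monotoneOn) (mem_Ioi.2 (mul_pos h1 hω))
      (mem_Ioi.2 (mul_pos (h1.trans_le h12) hω)) (by nlinarith)
  -- strict monotonicity of φ
  have hφmono : StrictMonoOn φ (Set.Ioi (0 : ℝ)) := by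
    intro l1 h1 l2 h2 h12
    rw [mem_Ioi] at h1 h2
    have hlt : ∀ᵐ ω ∂P, 0 < g (l2 * Z ω) - g (l1 * Z ω) := by
      filter_upwards [hZpos] with ω hω
      have := hgmono (mem_Ioi.2 (mul_pos h1 hω)) (mem_Ioi.2 (mul_pos h2 hω))
        (by nlinarith)
      linarith
    have hsubint : Integrable (fun ω => g (l2 * Z ω) - g (l1 * Z ω)) P :=
      (hint l2 h2).sub (hint l1 h1)
    have hpos : 0 < ∫ ω, (g (l2 * Z ω) - g (l1 * Z ω)) ∂P := by
      rw [integral_pos_iff_support_of_nonneg_ae (hlt.mono fun ω h => h.le) hsubint]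
      set spt : Set Ω := Function.support fun ω => g (l2 * Z ω) - g (l1 * Z ω) with hsptdef
      have hsupp : ∀ᵐ ω ∂P, ω ∈ spt := hlt.mono fun ω h => h.ne'
      have h0 : P sptᶜ = 0 := by
        rw [ae_iff] at hsupp
        rw [Set.compl_def]
        simpa using hsupp
      have h1' : (1 : ENNReal) ≤ P spt := by
        calc (1 : ENNReal) = P Set.univ := (measure_univ).symm
        _ = P (spt ∪ sptᶜ) := by rw [Set.union_compl_self]
        _ ≤ P spt + P sptᶜ := measure_union_le _ _
        _ = P spt := by rw [h0, add_zero]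
      exact lt_of_lt_of_le (by norm_num) h1'
    have heq : φ l2 - φ l1 = ∫ ω, (g (l2 * Z ω) - g (l1 * Z ω)) ∂P :=
      (integral_sub (hint l2 h2) (hint l1 h1)).symm
    linarith
  -- continuity of φ on Ioi 0
  have hφcont : ∀ l0 : ℝ, 0 < l0 → ContinuousAt φ l0 := by
    intro l0 h0
    have ha : (0 : ℝ) < l0 / 2 := by linarith
    have hb : (0 : ℝ) < l0 + 1 := by linarith
    have hmem : Ioo (l0 / 2) (l0 + 1) ∈ nhds l0 :=
      Ioo_mem_nhds (by linarith) (by linarith)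
    apply continuousAt_of_dominated
      (bound := fun ω => |g (l0 / 2 * Z ω)| + |g ((l0 + 1) * Z ω)|)
    · filter_upwards [hmem] with l hl
      exact (hint l (ha.trans hl.1)).aestronglyMeasurable
    · filter_upwards [hmem] with l hl
      filter_upwards [hcomp (l0 / 2) l ha hl.1.le,
        hcomp l (l0 + 1) (ha.trans hl.1) hl.2.le] with ω h1 h2
      rw [Real.norm_eq_abs, abs_le]
      constructor
      · have := neg_abs_le (g (l0 / 2 * Z ω))
        have := abs_nonneg (g ((l0 + 1) * Z ω))
        linarith
      · have := le_abs_self (g ((l0 + 1) * Z ω))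
        have := abs_nonneg (g (l0 / 2 * Z ω))
        linarith
    · exact (hint _ ha).abs.add (hint _ hb).abs
    · filter_upwards [hZpos] with ω hω
      have hc : ContinuousAt g (l0 * Z ω) :=
        hgcont.continuousAt (Ioi_mem_nhds (mul_pos h0 hω))
      have hm : ContinuousAt (fun l : ℝ => l * Z ω) l0 :=
        (continuous_mul_right (Z ω)).continuousAt
      exact ContinuousAt.comp (f := fun l : ℝ => l * Z ω) (x := l0) hc hm
  -- helper: toReal of complement probability
  have hcompl : ∀ t : Set Ω, MeasurableSet t → (P tᶜ).toReal = 1 - (P t).toReal := by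
    intro t ht
    rw [prob_compl_eq_one_sub ht, ENNReal.toReal_sub_of_le prob_le_one (by simp)]
    simp
  set C : ℝ := ∫ ω, |g (Z ω)| ∂P with hC
  -- Step: find a > 0 with φ a < x
  have hexa : ∃ a : ℝ, 0 < a ∧ φ a < x := by
    obtain ⟨c, hc1, hcP⟩ : ∃ c : ℝ, 1 ≤ c ∧ (1 : ℝ) / 2 ≤ (P {ω | Z ω ≤ c}).toReal := by
      set s : ℕ → Set Ω := fun n => {ω | (n : ℝ) < Z ω} with hs
      have hmeas : ∀ n, MeasurableSet (s n) := fun n =>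
        measurableSet_lt measurable_const hZmeas
      have hanti : Antitone s := by
        intro m n hmn ω hω
        simp only [hs, Set.mem_setOf_eq] at hω ⊢
        exact lt_of_le_of_lt (Nat.cast_le.2 hmn) hω
      have hiInter : (⋂ n, s n) = ∅ := by
        ext ω
        simp only [hs, Set.mem_iInter, Set.mem_setOf_eq, Set.mem_empty_iff_false,
          iff_false, not_forall, not_lt]
        obtain ⟨n, hn⟩ := exists_nat_gt (Z ω)
        exact ⟨n, hn.le⟩
      have htend : Tendsto (fun n => P (s n)) atTop (nhds 0) := by
        have h1 := tendsto_measure_iInter_atTop (μ := P) (s := s)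
          (fun n => (hmeas n).nullMeasurableSet) hanti ⟨0, measure_ne_top _ _⟩
        rw [hiInter, measure_empty] at h1
        exact h1
      have hev : ∀ᶠ n : ℕ in atTop, P (s n) < ENNReal.ofReal (1 / 2) :=
        htend.eventually_lt_const (by norm_num)
      obtain ⟨n, hn, hn1⟩ := (hev.and (eventually_ge_atTop 1)).exists
      have hlt : (P (s n)).toReal < 1 / 2 := ENNReal.toReal_lt_of_lt_ofReal hn
      refine ⟨(n : ℝ), by exact_mod_cast hn1, ?_⟩
      have hset : {ω | Z ω ≤ (n : ℝ)} = (s n)ᶜ := by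
        ext ω
        simp only [hs, Set.mem_setOf_eq, Set.mem_compl_iff, not_lt]
      rw [hset, hcompl _ (hmeas n)]
      linarith
    have hBmeas : MeasurableSet {ω | Z ω ≤ c} := measurableSet_le hZmeas measurable_const
    have hc0 : (0 : ℝ) < c := lt_of_lt_of_le one_pos hc1
    have hmul : Tendsto (fun l : ℝ => l * c) (nhdsWithin 0 (Ioi 0))
        (nhdsWithin 0 (Ioi 0)) := by
      apply tendsto_nhdsWithin_of_tendsto_nhds_of_eventually_within
      · have h1 : Tendsto (fun l : ℝ => l * c) (nhds 0) (nhds (0 * c)) :=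
          ((continuous_mul_right c).continuousAt)
        rw [zero_mul] at h1
        exact h1.mono_left nhdsWithin_le_nhds
      · filter_upwards [self_mem_nhdsWithin] with l hl
        exact mul_pos hl hc0
    have hgc : Tendsto (fun l : ℝ => g (l * c)) (nhdsWithin 0 (Ioi 0)) atBot :=
      hg0.comp hmul
    have hev : ∀ᶠ l in nhdsWithin 0 (Ioi 0),
        g (l * c) < min (2 * (x - C) - 1) 0 := hgc.eventually (eventually_lt_atBot _)
    have hev2 : Ioo (0 : ℝ) 1 ∈ nhdsWithin 0 (Ioi 0) :=
      Ioo_mem_nhdsGT_of_mem ⟨le_refl _, one_pos⟩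
    obtain ⟨a, hga, ha01⟩ := (hev.and hev2).exists
    refine ⟨a, ha01.1, ?_⟩
    have haint := hint a ha01.1
    have hsplit : φ a = (∫ ω in {ω | Z ω ≤ c}, g (a * Z ω) ∂P)
        + ∫ ω in {ω | Z ω ≤ c}ᶜ, g (a * Z ω) ∂P :=
      (integral_add_compl hBmeas haint).symm
    have hgac0 : g (a * c) < 0 := lt_of_lt_of_le hga (min_le_right _ _)
    have hgac : g (a * c) < 2 * (x - C) - 1 := lt_of_lt_of_le hga (min_le_left _ _)
    have h1 : (∫ ω in {ω | Z ω ≤ c}, g (a * Z ω) ∂P)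
        ≤ (P {ω | Z ω ≤ c}).toReal * g (a * c) := by
      have hb : ∀ᵐ ω ∂(P.restrict {ω | Z ω ≤ c}), g (a * Z ω) ≤ g (a * c) := by
        filter_upwards [ae_restrict_of_ae hZpos, ae_restrict_mem hBmeas] with ω hz hm
        have hm' : Z ω ≤ c := hm
        exact hgmono.monotoneOn (mem_Ioi.2 (mul_pos ha01.1 hz))
          (mem_Ioi.2 (mul_pos ha01.1 (lt_of_lt_of_le hz hm')))
          (by nlinarith [ha01.1.le])
      calc (∫ ω in {ω | Z ω ≤ c}, g (a * Z ω) ∂P)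
          ≤ ∫ _ω in {ω | Z ω ≤ c}, g (a * c) ∂P :=
            setIntegral_mono_ae_restrict haint.integrableOn
              (integrableOn_const (measure_ne_top _ _)) hb
        _ = (P {ω | Z ω ≤ c}).toReal * g (a * c) := by
            rw [setIntegral_const, smul_eq_mul]; rfl
    have h1' : (P {ω | Z ω ≤ c}).toReal * g (a * c) ≤ g (a * c) / 2 := by
      nlinarith
    have h2 : (∫ ω in {ω | Z ω ≤ c}ᶜ, g (a * Z ω) ∂P) ≤ C := by
      have hb0 : ∀ᵐ ω ∂P, g (a * Z ω) ≤ g (Z ω) := by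
        have h6 := hcomp a 1 ha01.1 ha01.2.le
        simp only [one_mul] at h6
        exact h6
      calc (∫ ω in {ω | Z ω ≤ c}ᶜ, g (a * Z ω) ∂P)
          ≤ ∫ ω in {ω | Z ω ≤ c}ᶜ, g (Z ω) ∂P :=
            setIntegral_mono_ae_restrict haint.integrableOn hgZint.integrableOn
              (ae_restrict_of_ae hb0)
        _ ≤ ∫ ω in {ω | Z ω ≤ c}ᶜ, |g (Z ω)| ∂P :=
            setIntegral_mono_ae_restrict hgZint.integrableOn
              hgZint.abs.integrableOn (ae_of_all _ fun ω => le_abs_self _)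
        _ ≤ C := setIntegral_le_integral hgZint.abs (ae_of_all _ fun ω => abs_nonneg _)
    rw [hsplit]
    linarith
  -- Step: find b > 0 with x < φ b
  have hexb : ∃ b : ℝ, 0 < b ∧ x < φ b := by
    obtain ⟨y, hxy, hyS⟩ := exists_between hxS
    have hytop : y ≠ ⊤ := (hyS.trans_le le_top).ne
    have hybot : y ≠ ⊥ := by
      intro h
      rw [h] at hxy
      exact (not_lt_bot hxy)
    set r : ℝ := y.toReal with hr
    have hyr : (r : EReal) = y := EReal.coe_toReal hytop hybot
    have hxr : x < r := by
      have : (x : EReal) < (r : EReal) := hyr ▸ hxy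
      exact_mod_cast this
    have hrS : (r : EReal) < S := hyr ▸ hyS
    have hev : ∀ᶠ t : ℝ in atTop, r < g t := by
      have h1 := hlim.eventually (lt_mem_nhds hrS)
      exact h1.mono fun t ht => by exact_mod_cast ht
    obtain ⟨M, hM⟩ := eventually_atTop.1 hev
    set s : ℕ → Set Ω := fun n => {ω | Z ω < 1 / (n + 1 : ℝ)} with hs
    have hmeas : ∀ n, MeasurableSet (s n) := fun n =>
      measurableSet_lt hZmeas measurable_const
    have hanti : Antitone s := by
      intro m n hmn ω hω
      simp only [hs, Set.mem_setOf_eq] at hω ⊢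
      refine lt_of_lt_of_le hω ?_
      apply one_div_le_one_div_of_le (by positivity)
      have : (m : ℝ) ≤ n := Nat.cast_le.2 hmn
      linarith
    have hinter : P (⋂ n, s n) = 0 := by
      apply measure_mono_null (t := {ω | ¬ 0 < Z ω})
      · intro ω hω
        simp only [Set.mem_iInter, hs, Set.mem_setOf_eq] at hω
        simp only [Set.mem_setOf_eq, not_lt]
        by_contra h
        push_neg at h
        obtain ⟨n, hn⟩ := exists_nat_gt (1 / Z ω)
        have h2 := hω n
        have h3 : (1 : ℝ) / (n + 1) < Z ω := by
          rw [div_lt_iff₀ (by positivity)]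
          rw [div_lt_iff₀ h] at hn
          nlinarith
        linarith
      · have h4 := hZpos
        rw [ae_iff] at h4
        exact h4
    have hPtend : Tendsto (fun n => (P (s n)).toReal) atTop (nhds 0) := by
      have h1 := tendsto_measure_iInter_atTop (μ := P) (s := s)
        (fun n => (hmeas n).nullMeasurableSet) hanti ⟨0, measure_ne_top _ _⟩
      rw [hinter] at h1
      have h2 := (ENNReal.tendsto_toReal (a := 0) (by simp)).comp h1
      exact h2
    have hItend : Tendsto
        (fun n => ∫ ω, (s n).indicator (fun ω => |g (Z ω)|) ω ∂P) atTop (nhds 0) := by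
      have h0 : (0 : ℝ) = ∫ _ω, (0 : ℝ) ∂P := by simp
      rw [h0]
      apply tendsto_integral_of_dominated_convergence (fun ω => |g (Z ω)|)
      · exact fun n => (hgZint.abs.aestronglyMeasurable).indicator (hmeas n)
      · exact hgZint.abs
      · intro n
        refine ae_of_all _ fun ω => ?_
        have := norm_indicator_le_norm_self (fun ω => |g (Z ω)|) ω (s := s n)
        simpa using this
      · filter_upwards [hZpos] with ω hω
        apply tendsto_const_nhds.congr'
        obtain ⟨N, hN⟩ := exists_nat_gt (1 / Z ω)
        filter_upwards [eventually_ge_atTop N] with n hn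
        have hnot : ω ∉ s n := by
          simp only [hs, Set.mem_setOf_eq, not_lt]
          rw [div_le_iff₀ (by positivity)]
          rw [div_lt_iff₀ hω] at hN
          have : (N : ℝ) ≤ n := Nat.cast_le.2 hn
          nlinarith
        exact (Set.indicator_of_notMem hnot _).symm
    have hsum : Tendsto (fun n => |r| * (P (s n)).toReal
        + ∫ ω, (s n).indicator (fun ω => |g (Z ω)|) ω ∂P) atTop (nhds 0) := by
      have h1 := (hPtend.const_mul |r|).add hItend
      simpa using h1
    obtain ⟨n, hn⟩ := (hsum.eventually_lt_const (by linarith : (0:ℝ) < r - x)).exists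
    set b : ℝ := max 1 ((|M| + 1) * (n + 1)) with hbdef
    have hb1 : (1 : ℝ) ≤ b := le_max_left _ _
    have hb0 : (0 : ℝ) < b := lt_of_lt_of_le one_pos hb1
    refine ⟨b, hb0, ?_⟩
    have hbint := hint b hb0
    have hsplit : φ b = (∫ ω in s n, g (b * Z ω) ∂P)
        + ∫ ω in (s n)ᶜ, g (b * Z ω) ∂P := (integral_add_compl (hmeas n) hbint).symm
    have h1 : -(∫ ω, (s n).indicator (fun ω => |g (Z ω)|) ω ∂P)
        ≤ ∫ ω in s n, g (b * Z ω) ∂P := by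
      have hb0' : ∀ᵐ ω ∂P, -|g (Z ω)| ≤ g (b * Z ω) := by
        filter_upwards [hcomp 1 b one_pos hb1] with ω h
        have h2 : g (Z ω) ≤ g (b * Z ω) := by simpa using h
        have h3 := neg_abs_le (g (Z ω))
        linarith
      calc -(∫ ω, (s n).indicator (fun ω => |g (Z ω)|) ω ∂P)
          = ∫ ω in s n, -|g (Z ω)| ∂P := by
            rw [integral_indicator (hmeas n), ← integral_neg]
        _ ≤ ∫ ω in s n, g (b * Z ω) ∂P :=
            setIntegral_mono_ae_restrict (hgZint.abs.neg.integrableOn)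
              hbint.integrableOn (ae_restrict_of_ae hb0')
    have h2 : r * (1 - (P (s n)).toReal) ≤ ∫ ω in (s n)ᶜ, g (b * Z ω) ∂P := by
      have hbnd : ∀ᵐ ω ∂(P.restrict (s n)ᶜ), r ≤ g (b * Z ω) := by
        filter_upwards [ae_restrict_of_ae hZpos, ae_restrict_mem (hmeas n).compl]
          with ω hz hm
        have hZc : 1 / (n + 1 : ℝ) ≤ Z ω := by
          simp only [Set.mem_compl_iff, hs, Set.mem_setOf_eq, not_lt] at hm
          exact hm
        have hbn : (|M| + 1) * (n + 1) ≤ b := le_max_right _ _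
        have hMb : M ≤ b * Z ω := by
          have h4 : |M| + 1 ≤ b * Z ω := by
            calc |M| + 1 = ((|M| + 1) * (n + 1)) * (1 / (n + 1 : ℝ)) := by field_simp
              _ ≤ b * Z ω := by
                  apply mul_le_mul hbn hZc (by positivity)
                  exact le_trans (by positivity) hbn
          have h5 := le_abs_self M
          linarith
        exact (hM (b * Z ω) hMb).le
      calc r * (1 - (P (s n)).toReal)
          = r * (P ((s n)ᶜ)).toReal := by rw [hcompl _ (hmeas n)]
        _ = ∫ _ω in (s n)ᶜ, r ∂P := by rw [setIntegral_const, smul_eq_mul, mul_comm]; rfl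
        _ ≤ ∫ ω in (s n)ᶜ, g (b * Z ω) ∂P :=
            setIntegral_mono_ae_restrict
              (integrableOn_const (measure_ne_top _ _))
              hbint.integrableOn hbnd
    have habs : r - |r| * (P (s n)).toReal ≤ r * (1 - (P (s n)).toReal) := by
      nlinarith [le_abs_self r, ENNReal.toReal_nonneg (a := P (s n))]
    rw [hsplit]
    linarith
  obtain ⟨a, ha0, hax⟩ := hexa
  obtain ⟨b, hb0, hbx⟩ := hexb
  have hab : a < b := by
    by_contra h
    push_neg at h
    have := hφmono.monotoneOn (mem_Ioi.2 hb0) (mem_Ioi.2 ha0) h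
    linarith
  have hcont : ContinuousOn φ (Icc a b) := fun l hl =>
    (hφcont l (ha0.trans_le hl.1)).continuousWithinAt
  obtain ⟨l, hlmem, hlx⟩ := intermediate_value_Icc hab.le hcont
    (⟨hax.le, hbx.le⟩ : x ∈ Icc (φ a) (φ b))
  have hl0 : 0 < l := ha0.trans_le hlmem.1
  refine ⟨l, ⟨hl0, hlx⟩, ?_⟩
  rintro l' ⟨hl'0, hl'x⟩
  exact hφmono.injOn (mem_Ioi.2 hl'0) (mem_Ioi.2 hl0) (hl'x.trans hlx.symm)
end

section
/- Let u be a utility function with domain (x̲, ∞), x̲ ∈ [−∞,∞), and let f(y) = sup_{x > x̲} { u(x) − x·y } be its convex conjugate, which is differentiable on (0,∞) with f'(y) = −(u')^{−1}(y). Let (Ω, 𝔉, P) be a probability space, Z a random variable with Z > 0 P-a.s. and E[Z] = 1, and λ > 0 such that f(λZ) and Z·f'(λZ) are P-integrable. Set x = −E[Z·f'(λZ)] and Ĝ = −f'(λZ) − x. Then: (i) u(x + Ĝ) = f(λZ) − λZ·f'(λZ) P-a.s., hence u(x + Ĝ) is P-integrable with E|u(x + Ĝ)| ≤ E|f(λZ)|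 + λ·E[Z·|f'(λZ)|]; (ii) for every random variable G such that x + G > x̲ P-a.s., the positive part of u(x + G) is P-integrable, and E[Z·G] ≤ 0, one has E[u(x + G)] ≤ E[u(x + Ĝ)]. -/
open Set Filter MeasureTheory
open scoped ENNReal

/-- Static duality underlying Theorem 2 of the paper. Let `u` be a utility
function on `(x̲, ∞)` with convex conjugate `f` (so `f'(y) = −(u')⁻¹(y) = −I(y)`),
`Z > 0` a.s. with `E[Z] = 1`, `λ > 0` with `f(λZ)` and `Z·f'(λZ)` integrable.
Set `x = −E[Z·f'(λZ)]` and `Ĝ = −f'(λZ) − x`. Then: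
(i) `u(x + Ĝ) = f(λZ) − λZ·f'(λZ)` a.s., hence `u(x + Ĝ)` is integrable with
`E|u(x + Ĝ)| ≤ E|f(λZ)| + λ·E[Z·|f'(λZ)|]`;
(ii) for every random variable `G` with `x + G > x̲` a.s., `(u(x + G))⁺`
integrable, `Z·G` integrable and `E[Z·G] ≤ 0`, one has
`E[u(x + G)] ≤ E[u(x + Ĝ)]` (the left-hand expectation taken in the extended
reals, as the integral of the positive part minus the lower integral of the
negative part). -/
theorem stmt_13 (xb : EReal) (hxb : xb < ⊤)
    (u u' I f f' : ℝ → ℝ)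
    (hderiv : ∀ z : ℝ, xb < (z : EReal) → HasDerivAt u (u' z) z)
    (hcont : ContinuousOn u' {z : ℝ | xb < (z : EReal)})
    (hmono : StrictMonoOn u {z : ℝ | xb < (z : EReal)})
    (hconc : StrictConcaveOn ℝ {z : ℝ | xb < (z : EReal)} u)
    (hlim_top : Tendsto u' atTop (nhds 0))
    (hlim_xb : Tendsto u'
      (Filter.comap (fun z : ℝ => (z : EReal)) (nhdsWithin xb (Set.Ioi xb)))
      atTop)
    (hI_mem : ∀ y : ℝ, 0 < y → xb < ((I y : ℝ) : EReal) ∧ u' (I y) = y)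
    (hI_left : ∀ z : ℝ, xb < (z : EReal) → I (u' z) = z)
    (hf : ∀ y : ℝ, 0 < y →
      IsLUB ((fun z : ℝ => u z - z * y) '' {z : ℝ | xb < (z : EReal)}) (f y))
    (hf' : ∀ y : ℝ, 0 < y → HasDerivAt f (f' y) y)
    (hf'I : ∀ y : ℝ, 0 < y → f' y = -(I y))
    {Ω : Type*} [MeasurableSpace Ω] (P : Measure Ω) [IsProbabilityMeasure P]
    (Z : Ω → ℝ) (hZmeas : Measurable Z) (hZpos : ∀ᵐ ω ∂P, 0 < Z ω)
    (hZint : Integrable Z P) (hZmean : ∫ ω, Z ω ∂P = 1)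
    (lam : ℝ) (hlam : 0 < lam)
    (hfint : Integrable (fun ω => f (lam * Z ω)) P)
    (hf'int : Integrable (fun ω => Z ω * f' (lam * Z ω)) P)
    (x : ℝ) (hx : x = -∫ ω, Z ω * f' (lam * Z ω) ∂P)
    (G' : Ω → ℝ) (hG' : ∀ ω, G' ω = -f' (lam * Z ω) - x) :
    -- (i)
    ((∀ᵐ ω ∂P, u (x + G' ω) = f (lam * Z ω) - lam * Z ω * f' (lam * Z ω)) ∧
      Integrable (fun ω => u (x + G' ω)) P ∧
      ∫ ω, |u (x + G' ω)| ∂P ≤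
        (∫ ω, |f (lam * Z ω)| ∂P) + lam * ∫ ω, Z ω * |f' (lam * Z ω)| ∂P) ∧
    -- (ii)
    (∀ G : Ω → ℝ, Measurable G →
      (∀ᵐ ω ∂P, xb < ((x + G ω : ℝ) : EReal)) →
      Integrable (fun ω => max (u (x + G ω)) 0) P →
      Integrable (fun ω => Z ω * G ω) P →
      (∫ ω, Z ω * G ω ∂P) ≤ 0 →
      ((∫ ω, max (u (x + G ω)) 0 ∂P : ℝ) : EReal) -
          ((∫⁻ ω, ENNReal.ofReal (-(u (x + G ω))) ∂P : ℝ≥0∞) : EReal) ≤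
        ((∫ ω, u (x + G' ω) ∂P : ℝ) : EReal)) := by
  set S := {z : ℝ | xb < (z : EReal)} with hS
  have hconvex : ConvexOn ℝ S (-u) := hconc.concaveOn.neg
  -- tangent line inequality for the concave function u
  have tangent : ∀ a ∈ S, ∀ z ∈ S, u z ≤ u a + u' a * (z - a) := by
    intro a ha z hz
    rcases lt_trichotomy z a with h | h | h
    · have hda : HasDerivAt (-u) (-u' a) a := (hderiv a ha).neg
      have := hconvex.slope_le_of_hasDerivAt hz ha h hda
      rw [slope_def_field] at this
      have hpos : (0:ℝ) < a - z := by linarith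
      rw [div_le_iff₀ hpos] at this
      simp only [Pi.neg_apply] at this
      nlinarith
    · simp [h]
    · have hda : HasDerivAt (-u) (-u' a) a := (hderiv a ha).neg
      have := hconvex.le_slope_of_hasDerivAt ha hz h hda
      rw [slope_def_field] at this
      have hpos : (0:ℝ) < z - a := by linarith
      rw [le_div_iff₀ hpos] at this
      simp only [Pi.neg_apply] at this
      nlinarith
  -- Fenchel inequality and the equality case at I y
  have fenchel_le : ∀ y : ℝ, 0 < y → ∀ z ∈ S, u z - z * y ≤ f y := by
    intro y hy z hz
    exact (hf y hy).1 ⟨z, hz, rfl⟩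
  have fenchel_eq : ∀ y : ℝ, 0 < y → f y = u (I y) - I y * y := by
    intro y hy
    obtain ⟨hIy, hu'⟩ := hI_mem y hy
    refine le_antisymm ((hf y hy).2 ?_) (fenchel_le y hy (I y) hIy)
    rintro _ ⟨z, hz, rfl⟩
    have ht := tangent (I y) hIy z hz
    rw [hu'] at ht
    show u z - z * y ≤ u (I y) - I y * y
    have hr : y * (z - I y) = z * y - I y * y := by ring
    linarith
  -- pointwise identity for the optimal gain
  have key : ∀ ω, 0 < Z ω →
      u (x + G' ω) = f (lam * Z ω) - lam * Z ω * f' (lam * Z ω) := by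
    intro ω hω
    have hy : 0 < lam * Z ω := mul_pos hlam hω
    have h1 : f' (lam * Z ω) = -(I (lam * Z ω)) := hf'I _ hy
    have h2 : x + G' ω = I (lam * Z ω) := by rw [hG', h1]; ring
    have h3 := fenchel_eq _ hy
    rw [h2, h1]; linarith
  have hae : ∀ᵐ ω ∂P, u (x + G' ω) = f (lam * Z ω) - lam * Z ω * f' (lam * Z ω) :=
    hZpos.mono fun ω h => key ω h
  have hint2 : Integrable (fun ω => f (lam * Z ω) - lam * (Z ω * f' (lam * Z ω))) P :=
    hfint.sub (hf'int.const_mul lam)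
  have hintu : Integrable (fun ω => u (x + G' ω)) P := by
    refine hint2.congr (hae.mono fun ω h => ?_)
    dsimp only; rw [h]; ring
  -- integral of the optimal utility
  have hval : ∫ ω, u (x + G' ω) ∂P = (∫ ω, f (lam * Z ω) ∂P) + lam * x := by
    have : ∫ ω, u (x + G' ω) ∂P
        = ∫ ω, (f (lam * Z ω) - lam * (Z ω * f' (lam * Z ω))) ∂P := by
      refine integral_congr_ae (hae.mono fun ω h => ?_)
      dsimp only; rw [h]; ring
    rw [this, integral_sub hfint (hf'int.const_mul lam), integral_const_mul, hx]
    ring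
  constructor
  · refine ⟨hae, hintu, ?_⟩
    have habsZ : Integrable (fun ω => Z ω * |f' (lam * Z ω)|) P := by
      refine hf'int.abs.congr (hZpos.mono fun ω h => ?_)
      dsimp only; rw [abs_mul, abs_of_pos h]
    have hRint : Integrable
        (fun ω => |f (lam * Z ω)| + lam * (Z ω * |f' (lam * Z ω)|)) P :=
      hfint.abs.add (habsZ.const_mul lam)
    have hptwise : ∀ᵐ ω ∂P, |u (x + G' ω)| ≤
        |f (lam * Z ω)| + lam * (Z ω * |f' (lam * Z ω)|) := by
      filter_upwards [hae, hZpos] with ω h hZ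
      rw [h]
      calc |f (lam * Z ω) - lam * Z ω * f' (lam * Z ω)|
          ≤ |f (lam * Z ω)| + |lam * Z ω * f' (lam * Z ω)| := abs_sub _ _
        _ = |f (lam * Z ω)| + lam * (Z ω * |f' (lam * Z ω)|) := by
            rw [abs_mul, abs_mul, abs_of_pos hlam, abs_of_pos hZ]; ring
    calc ∫ ω, |u (x + G' ω)| ∂P
        ≤ ∫ ω, (|f (lam * Z ω)| + lam * (Z ω * |f' (lam * Z ω)|)) ∂P :=
          integral_mono_ae hintu.abs hRint hptwise
      _ = (∫ ω, |f (lam * Z ω)| ∂P) + lam * ∫ ω, Z ω * |f' (lam * Z ω)| ∂P := by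
          rw [integral_add hfint.abs (habsZ.const_mul lam), integral_const_mul]
  · intro G hGmeas hGdom hGpos hZG hZGle
    set h : Ω → ℝ :=
      fun ω => f (lam * Z ω) + ((lam * x) * Z ω + lam * (Z ω * G ω)) with hh
    have hhint : Integrable h P :=
      hfint.add ((hZint.const_mul (lam * x)).add (hZG.const_mul lam))
    have hle : ∀ᵐ ω ∂P, u (x + G ω) ≤ h ω := by
      filter_upwards [hZpos, hGdom] with ω h1 h2
      have hy : 0 < lam * Z ω := mul_pos hlam h1
      have hF := fenchel_le (lam * Z ω) hy (x + G ω) h2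
      simp only [hh]
      nlinarith
    -- compare positive parts and negative parts
    have hineq1 : ∫ ω, max (u (x + G ω)) 0 ∂P ≤ ∫ ω, max (h ω) 0 ∂P :=
      integral_mono_ae hGpos hhint.pos_part (hle.mono fun ω hω => max_le_max hω le_rfl)
    have hineq2 : (∫⁻ ω, ENNReal.ofReal (-(h ω)) ∂P)
        ≤ ∫⁻ ω, ENNReal.ofReal (-(u (x + G ω))) ∂P :=
      lintegral_mono_ae (hle.mono fun ω hω => ENNReal.ofReal_le_ofReal (by linarith))
    -- identify the EReal decomposition of ∫ h
    have hnint : Integrable (fun ω => max (-(h ω)) 0) P := hhint.neg.pos_part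
    have hlneg : (∫⁻ ω, ENNReal.ofReal (-(h ω)) ∂P)
        = ENNReal.ofReal (∫ ω, max (-(h ω)) 0 ∂P) := by
      rw [ofReal_integral_eq_lintegral_ofReal hnint
        (Filter.Eventually.of_forall fun ω => le_max_right _ _)]
      refine lintegral_congr fun ω => ?_
      rcases le_total (-(h ω)) 0 with hc | hc
      · rw [max_eq_right hc, ENNReal.ofReal_of_nonpos hc, ENNReal.ofReal_zero]
      · rw [max_eq_left hc]
    have hnn : 0 ≤ ∫ ω, max (-(h ω)) 0 ∂P :=
      integral_nonneg fun ω => le_max_right _ _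
    have hint_h : (((∫ ω, max (h ω) 0 ∂P : ℝ)) : EReal)
        - ((∫⁻ ω, ENNReal.ofReal (-(h ω)) ∂P : ℝ≥0∞) : EReal)
        = ((∫ ω, h ω ∂P : ℝ) : EReal) := by
      rw [hlneg, EReal.coe_ennreal_ofReal, max_eq_left hnn, ← EReal.coe_sub]
      norm_cast
      rw [← integral_sub hhint.pos_part hnint]
      refine integral_congr_ae (Filter.Eventually.of_forall fun ω => ?_)
      dsimp only
      rcases le_total (h ω) 0 with hc | hc
      · rw [max_eq_right hc, max_eq_left (by linarith : (0:ℝ) ≤ -h ω)]; ring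
      · rw [max_eq_left hc, max_eq_right (by linarith : -h ω ≤ 0)]; ring
    -- bound ∫ h
    have hhval : ∫ ω, h ω ∂P ≤ (∫ ω, f (lam * Z ω) ∂P) + lam * x := by
      have e1 : ∫ ω, h ω ∂P = (∫ ω, f (lam * Z ω) ∂P)
          + ∫ ω, ((lam * x) * Z ω + lam * (Z ω * G ω)) ∂P :=
        integral_add hfint ((hZint.const_mul (lam * x)).add (hZG.const_mul lam))
      have e2 : ∫ ω, ((lam * x) * Z ω + lam * (Z ω * G ω)) ∂P
          = (lam * x) * ∫ ω, Z ω ∂P + lam * ∫ ω, Z ω * G ω ∂P := by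
        rw [integral_add (hZint.const_mul (lam * x)) (hZG.const_mul lam),
          integral_const_mul, integral_const_mul]
      rw [e1, e2, hZmean]
      nlinarith
    calc ((∫ ω, max (u (x + G ω)) 0 ∂P : ℝ) : EReal)
          - ((∫⁻ ω, ENNReal.ofReal (-(u (x + G ω))) ∂P : ℝ≥0∞) : EReal)
        ≤ ((∫ ω, max (h ω) 0 ∂P : ℝ) : EReal)
          - ((∫⁻ ω, ENNReal.ofReal (-(h ω)) ∂P : ℝ≥0∞) : EReal) :=
          EReal.sub_le_sub (EReal.coe_le_coe_iff.2 hineq1)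
            (EReal.coe_ennreal_le_coe_ennreal_iff.2 hineq2)
      _ = ((∫ ω, h ω ∂P : ℝ) : EReal) := hint_h
      _ ≤ ((∫ ω, u (x + G' ω) ∂P : ℝ) : EReal) := by
          rw [hval]; exact_mod_cast hhval
end
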